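/- arXiv:1907.11604 — 2 statements merged into one kernel-verified Lean document; each statement's English description precedes it below -/
import Mathlib

section
/- Let $u: \mathbb{R}^{n+1} \to \mathbb{R}$ be a continuous function homogeneous of degree $\alpha \in (0,1)$ (i.e., $u(\lambda x) = \lambda^\alpha u(x)$ for all $\lambda > 0$) with $u \in \dot C^\alpha(\mathbb{R}^{n+1})$ and $u(x_0) = 0$ for some $x_0 \neq 0$. Suppose the rescalings $u_k(x) = \rho_k^{-\alpha} u(x_0 + \rho_k x)$ converge locally uniformly to a function $u_0$ for some sequence $\rho_k \to 0^+$. Then $u_0$ is invariant in the direction of $x_0$: for every $x \in \mathbb{R}^{n+1}$ and every $\lambda \in \mathbb{R}$, $u_0(x + \lambda x_0) = u_0(x)$. -/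
/-!
Write `s = 1 + r l`. Then `x₀ + r (x + l x₀) = s (x₀ + (r / s) x)`, so homogeneity trades the
shift along `x₀` for the dilation factor `s^α` and a change of the base point from `x₀ + r x`
to `x₀ + (r / s) x`, at distance `r² |l| ‖x‖ / s`. After the scaling `r^(-α)`, the Hölder bound
(together with `u x₀ = 0`) makes both errors `O((r |l| ‖x‖)^α + |s^α - 1| ‖x‖^α)`, which
vanish as `r → 0⁺`.
-/

open MeasureTheory Metric Set Filter

open Topology

section Homogeneous

variable {E : Type*} [NormedAddCommGroup E] [NormedSpace ℝ E] {u : E → ℝ} {α C : ℝ}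

lemma abs_sub_le_of_homogeneous_of_holder
    (hhom : ∀ l : ℝ, 0 < l → ∀ x, u (l • x) = l ^ α * u x)
    (hHolder : ∀ x z, |u x - u z| ≤ C * ‖x - z‖ ^ α) {s : ℝ} (hs : 0 < s) (a y : E) :
    |u (s • a) - u y| ≤ C * ‖s • a - s • y‖ ^ α + |s ^ α - 1| * |u y| := by
  have hsα : 0 ≤ s ^ α := by positivity
  have hscale : s ^ α * ‖a - y‖ ^ α = ‖s • a - s • y‖ ^ α := by
    rw [← smul_sub, norm_smul, Real.norm_of_nonneg hs.le, Real.mul_rpow hs.le (norm_nonneg _)]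
  calc |u (s • a) - u y| = |s ^ α * (u a - u y) + (s ^ α - 1) * u y| := by
        rw [hhom s hs]; ring_nf
    _ ≤ s ^ α * |u a - u y| + |s ^ α - 1| * |u y| := by
        grw [abs_add_le, abs_mul, abs_mul, abs_of_nonneg hsα]
    _ ≤ s ^ α * (C * ‖a - y‖ ^ α) + |s ^ α - 1| * |u y| := by grw [hHolder a y]
    _ = C * ‖s • a - s • y‖ ^ α + |s ^ α - 1| * |u y| := by rw [← hscale]; ring

lemma abs_rescale_shift_sub_le
    (hhom : ∀ l : ℝ, 0 < l → ∀ x, u (l • x) = l ^ α * u x)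
    (hHolder : ∀ x z, |u x - u z| ≤ C * ‖x - z‖ ^ α) {x₀ : E} (hux₀ : u x₀ = 0) (x : E)
    {l r : ℝ} (hr : 0 < r) (hs : 0 < 1 + r * l) :
    |r ^ (-α) * u (x₀ + r • (x + l • x₀)) - r ^ (-α) * u (x₀ + r • x)| ≤
      C * (r * |l| * ‖x‖) ^ α + |(1 + r * l) ^ α - 1| * (C * ‖x‖ ^ α) := by
  set s := 1 + r * l
  have hshift : x₀ + r • (x + l • x₀) = s • (x₀ + (r / s) • x) := by
    rw [smul_add s, smul_smul, mul_div_cancel₀ r hs.ne']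
    simp only [s]
    module
  have hdist : ‖s • (x₀ + (r / s) • x) - s • (x₀ + r • x)‖ = r * (r * |l| * ‖x‖) := by
    rw [← hshift,
      show x₀ + r • (x + l • x₀) - s • (x₀ + r • x) = (-(r * (r * l))) • x by module,
      norm_smul, Real.norm_eq_abs, abs_neg, abs_mul, abs_mul, abs_of_pos hr]
    ring
  have hbase : |u (x₀ + r • x)| ≤ C * (r * ‖x‖) ^ α := by
    simpa [hux₀, norm_smul, abs_of_pos hr] using hHolder (x₀ + r • x) x₀
  have hrα : r ^ (-α) * r ^ α = 1 := by rw [← Real.rpow_add hr, neg_add_cancel, Real.rpow_zero]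
  calc |r ^ (-α) * u (x₀ + r • (x + l • x₀)) - r ^ (-α) * u (x₀ + r • x)|
      = r ^ (-α) * |u (s • (x₀ + (r / s) • x)) - u (x₀ + r • x)| := by
        rw [← mul_sub, abs_mul, abs_of_pos (by positivity), hshift]
    _ ≤ r ^ (-α) * (C * (r * (r * |l| * ‖x‖)) ^ α + |s ^ α - 1| * (C * (r * ‖x‖) ^ α)) := by
        grw [abs_sub_le_of_homogeneous_of_holder hhom hHolder hs, hdist, hbase]
    _ = C * (r * |l| * ‖x‖) ^ α + |s ^ α - 1| * (C * ‖x‖ ^ α) := by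
        rw [Real.mul_rpow hr.le (by positivity), Real.mul_rpow hr.le (norm_nonneg _)]
        linear_combination (C * (r * |l| * ‖x‖) ^ α + |s ^ α - 1| * (C * ‖x‖ ^ α)) * hrα

lemma tendsto_rescale_shift_sub (hα : 0 < α)
    (hhom : ∀ l : ℝ, 0 < l → ∀ x, u (l • x) = l ^ α * u x)
    (hHolder : ∀ x z, |u x - u z| ≤ C * ‖x - z‖ ^ α) {x₀ : E} (hux₀ : u x₀ = 0)
    (x : E) (l : ℝ) :
    Tendsto (fun r => r ^ (-α) * u (x₀ + r • (x + l • x₀)) - r ^ (-α) * u (x₀ + r • x))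
      (𝓝[>] 0) (𝓝 0) := by
  have hs : Tendsto (fun r : ℝ => 1 + r * l) (𝓝 0) (𝓝 1) := by
    simpa using ((tendsto_id (x := 𝓝 (0 : ℝ))).mul_const l).const_add 1
  have hbound : Tendsto
      (fun r : ℝ => C * (r * |l| * ‖x‖) ^ α + |(1 + r * l) ^ α - 1| * (C * ‖x‖ ^ α))
      (𝓝 0) (𝓝 0) := by
    have hsmall : Tendsto (fun r : ℝ => (r * |l| * ‖x‖) ^ α) (𝓝 0) (𝓝 0) := by
      simpa [Real.zero_rpow hα.ne'] using
        (((tendsto_id (x := 𝓝 (0 : ℝ))).mul_const |l|).mul_const ‖x‖).rpow_const (Or.inr hα.le)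
    have hsα : Tendsto (fun r : ℝ => (1 + r * l) ^ α) (𝓝 0) (𝓝 1) := by
      simpa using hs.rpow_const (Or.inl one_ne_zero)
    simpa using (hsmall.const_mul C).add (((hsα.sub_const 1).abs).mul_const (C * ‖x‖ ^ α))
  rw [tendsto_zero_iff_abs_tendsto_zero]
  refine squeeze_zero' (.of_forall fun _ => abs_nonneg _) ?_ (hbound.mono_left nhdsWithin_le_nhds)
  filter_upwards [self_mem_nhdsWithin,
    nhdsWithin_le_nhds (hs.eventually (eventually_gt_nhds one_pos))] with r hr hsr
  exact abs_rescale_shift_sub_le hhom hHolder hux₀ x hr hsr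

end Homogeneous

theorem stmt_2_general (n : ℕ) (α C : ℝ) (hα : α ∈ Set.Ioo (0 : ℝ) 1)
    (u u₀ : EuclideanSpace ℝ (Fin (n + 1)) → ℝ)
    (hhom : ∀ l : ℝ, 0 < l → ∀ x, u (l • x) = l ^ α * u x)
    (hHolder : ∀ x z, |u x - u z| ≤ C * ‖x - z‖ ^ α)
    (x₀ : EuclideanSpace ℝ (Fin (n + 1))) (hux₀ : u x₀ = 0)
    (ρ : ℕ → ℝ) (hρpos : ∀ k, 0 < ρ k) (hρ : Tendsto ρ atTop (nhds 0))
    (hconv : TendstoLocallyUniformly (fun k x => (ρ k) ^ (-α) * u (x₀ + ρ k • x)) u₀ atTop) :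
    ∀ x : EuclideanSpace ℝ (Fin (n + 1)), ∀ l : ℝ, u₀ (x + l • x₀) = u₀ x := by
  intro x l
  have hρ' : Tendsto ρ atTop (𝓝[>] 0) :=
    tendsto_nhdsWithin_iff.mpr ⟨hρ, .of_forall hρpos⟩
  have hdiff := (tendsto_rescale_shift_sub hα.1 hhom hHolder hux₀ x l).comp hρ'
  have hpt := fun y => (hconv.tendstoLocallyUniformlyOn (s := univ)).tendsto_at (mem_univ y)
  have hlim := (hpt (x + l • x₀)).sub (hpt x)
  exact sub_eq_zero.mp (tendsto_nhds_unique hlim hdiff)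

/-- Blow-ups of an `α`-homogeneous Hölder continuous function at a nonzero
zero point `x₀` are invariant in the direction of `x₀`. -/
theorem stmt_2 (n : ℕ) (α C : ℝ) (hα : α ∈ Set.Ioo (0 : ℝ) 1)
    (u u₀ : EuclideanSpace ℝ (Fin (n + 1)) → ℝ)
    (hu_cont : Continuous u)
    (hhom : ∀ l : ℝ, 0 < l → ∀ x, u (l • x) = l ^ α * u x)
    (hHolder : ∀ x z, |u x - u z| ≤ C * ‖x - z‖ ^ α)
    (x₀ : EuclideanSpace ℝ (Fin (n + 1))) (hx₀ : x₀ ≠ 0) (hux₀ : u x₀ = 0)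
    (ρ : ℕ → ℝ) (hρpos : ∀ k, 0 < ρ k) (hρ : Tendsto ρ atTop (nhds 0))
    (hconv : TendstoLocallyUniformly (fun k x => (ρ k) ^ (-α) * u (x₀ + ρ k • x)) u₀ atTop) :
    ∀ x : EuclideanSpace ℝ (Fin (n + 1)), ∀ l : ℝ, u₀ (x + l • x₀) = u₀ x :=
  stmt_2_general n α C hα u u₀ hhom hHolder x₀ hux₀ ρ hρpos hρ hconv
end

section
/- Let $F \subset \mathbb{R}^n$ be a set with the following property: there exist $\alpha > 0$, $t > 0$ such that for every $x \in F$ there is $r_x > 0$ so that for all $0 < r < r_x$, every subset $S \subset B(x,r) \cap F$ can be covered by finitely many balls $B(x_i, r_i)$ with centers $x_i \in S$ satisfying $\sum_i r_i^t \leq r^t/2$. Then $\mathcal{H}^t(F) = 0$. -/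
/-!
Call a finite family of balls `B(cᵢ, ρᵢ)` centred in `S` and covering `S` an `a`-cover of `S`
when `∑ ρᵢᵗ ≤ a`. On a set `D` where the halving property holds below a uniform scale `δ`,
any `a`-cover of `S ⊆ D` with `a < δᵗ` has balls of radius `< δ`; halving each of them gives
an `a/2`-cover, so iterating yields covers of `S` with arbitrarily small `∑ ρᵢᵗ`, which
forces `μH[t] S = 0`. Each point of `D` has such an `S` as a relative neighbourhood, so
`μH[t] D = 0`, and `F` is the countable union of the sets `{x ∈ F | 1/(k+1) ≤ rₓ}`.
-/

open MeasureTheory Metric Set Filter Topology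

variable {E : Type*} [MetricSpace E]

def HasCenteredBallCover (t a : ℝ) (S : Set E) : Prop :=
  ∃ (ι : Type) (_ : Fintype ι) (c : ι → E) (ρ : ι → ℝ),
    (∀ i, c i ∈ S) ∧ (∀ i, 0 < ρ i) ∧ S ⊆ ⋃ i, ball (c i) (ρ i) ∧ ∑ i, ρ i ^ t ≤ a

def HasHalvingCovers (t δ : ℝ) (D : Set E) : Prop :=
  ∀ x ∈ D, ∀ r, 0 < r → r < δ → ∀ S ⊆ ball x r ∩ D, HasCenteredBallCover t (r ^ t / 2) S

lemma rpow_le_sum_rpow {ι : Type*} [Fintype ι] {ρ : ι → ℝ} (hρ : ∀ i, 0 ≤ ρ i) (t : ℝ)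
    (i : ι) : ρ i ^ t ≤ ∑ j, ρ j ^ t :=
  Finset.single_le_sum (fun j _ => Real.rpow_nonneg (hρ j) t) (Finset.mem_univ i)

lemma ediam_ball_le_ofReal (x : E) (ρ : ℝ) : ediam (ball x ρ) ≤ ENNReal.ofReal (2 * ρ) :=
  ediam_le_of_forall_dist_le fun y hy z hz => by
    linarith [dist_triangle_right y z x, mem_ball.1 hy, mem_ball.1 hz]

lemma ediam_ball_rpow_le {t ρ : ℝ} (ht : 0 < t) (hρ : 0 ≤ ρ) (x : E) :
    ediam (ball x ρ) ^ t ≤ ENNReal.ofReal (2 ^ t * ρ ^ t) := by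
  rw [← Real.mul_rpow zero_le_two hρ, ← ENNReal.ofReal_rpow_of_nonneg (by positivity) ht.le]
  exact ENNReal.rpow_le_rpow (ediam_ball_le_ofReal x ρ) ht.le

namespace HasCenteredBallCover

variable {t a b : ℝ} {S : Set E}

lemma nonneg (h : HasCenteredBallCover t a S) : 0 ≤ a := by
  obtain ⟨ι, _, c, ρ, -, hρ, -, hsum⟩ := h
  exact (Finset.sum_nonneg fun i _ => Real.rpow_nonneg (hρ i).le t).trans hsum

lemma mono (h : HasCenteredBallCover t a S) (hab : a ≤ b) : HasCenteredBallCover t b S := by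
  obtain ⟨ι, _, c, ρ, hc, hρ, hcov, hsum⟩ := h
  exact ⟨ι, inferInstance, c, ρ, hc, hρ, hcov, hsum.trans hab⟩

theorem hausdorffMeasure_eq_zero [MeasurableSpace E] [BorelSpace E] (ht : 0 < t)
    (h : ∀ ε > 0, HasCenteredBallCover t ε S) : μH[t] S = 0 := by
  set δ : ℕ → ℝ := fun k => 1 / ((k : ℝ) + 1)
  have hδ : Tendsto δ atTop (𝓝 0) := tendsto_one_div_add_atTop_nhds_zero_nat
  choose ι _ c ρ _ hρ hcov hsum using fun k => h (δ k ^ t) (by positivity)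
  have hρδ (k : ℕ) (i : ι k) : ρ k i ≤ δ k :=
    (Real.rpow_le_rpow_iff (hρ k i).le (by positivity) ht).1
      ((rpow_le_sum_rpow (fun j => (hρ k j).le) t i).trans (hsum k))
  have hδt : Tendsto (fun k => δ k ^ t) atTop (𝓝 0) := by
    simpa [Function.comp_def, Real.zero_rpow ht.ne'] using
      (Real.continuousAt_rpow_const 0 t (Or.inr ht.le)).tendsto.comp hδ
  have hsum_ediam (k : ℕ) :
      ∑ i, ediam (ball (c k i) (ρ k i)) ^ t ≤ ENNReal.ofReal (2 ^ t * δ k ^ t) :=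
    calc ∑ i, ediam (ball (c k i) (ρ k i)) ^ t
        ≤ ∑ i, ENNReal.ofReal (2 ^ t * ρ k i ^ t) :=
          Finset.sum_le_sum fun i _ => ediam_ball_rpow_le ht (hρ k i).le _
      _ = ENNReal.ofReal (2 ^ t * ∑ i, ρ k i ^ t) := by
          rw [Finset.mul_sum, ENNReal.ofReal_sum_of_nonneg fun i _ => by
            have := (hρ k i).le; positivity]
      _ ≤ ENNReal.ofReal (2 ^ t * δ k ^ t) := by gcongr; exact hsum k
  have hle := Measure.hausdorffMeasure_le_liminf_sum t S (fun k => ENNReal.ofReal (2 * δ k))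
    (by simpa using ENNReal.tendsto_ofReal (hδ.const_mul 2)) (fun k i => ball (c k i) (ρ k i))
    (.of_forall fun k i => (ediam_ball_le_ofReal _ _).trans
      (ENNReal.ofReal_le_ofReal (by linarith [hρδ k i])))
    (.of_forall hcov)
  refine le_antisymm (hle.trans ?_) zero_le
  calc liminf (fun k => ∑ i, ediam (ball (c k i) (ρ k i)) ^ t) atTop
      ≤ liminf (fun k => ENNReal.ofReal (2 ^ t * δ k ^ t)) atTop :=
        liminf_le_liminf (.of_forall hsum_ediam)
    _ = 0 := by simpa using (ENNReal.tendsto_ofReal (hδt.const_mul (2 ^ t))).liminf_eq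

end HasCenteredBallCover

namespace HasHalvingCovers

variable {t δ a : ℝ} {D S : Set E}

lemma halve (hD : HasHalvingCovers t δ D) (ht : 0 < t) (hδ : 0 ≤ δ) (hSD : S ⊆ D)
    (ha : a < δ ^ t) (h : HasCenteredBallCover t a S) : HasCenteredBallCover t (a / 2) S := by
  obtain ⟨ι, _, c, ρ, hc, hρ, hcov, hsum⟩ := h
  have hρδ (i : ι) : ρ i < δ :=
    (Real.rpow_lt_rpow_iff (hρ i).le hδ ht).1
      (((rpow_le_sum_rpow (fun j => (hρ j).le) t i).trans hsum).trans_lt ha)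
  choose κ _ c' ρ' hc' hρ' hcov' hsum' using fun i =>
    hD (c i) (hSD (hc i)) (ρ i) (hρ i) (hρδ i) (S ∩ ball (c i) (ρ i))
      fun y hy => ⟨hy.2, hSD hy.1⟩
  refine ⟨Σ i, κ i, inferInstance, fun p => c' p.1 p.2, fun p => ρ' p.1 p.2,
    fun p => (hc' p.1 p.2).1, fun p => hρ' p.1 p.2, fun y hy => ?_, ?_⟩
  · obtain ⟨i, hi⟩ := mem_iUnion.1 (hcov hy)
    obtain ⟨j, hj⟩ := mem_iUnion.1 (hcov' i ⟨hy, hi⟩)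
    exact mem_iUnion.2 ⟨⟨i, j⟩, hj⟩
  · calc ∑ p : Σ i, κ i, ρ' p.1 p.2 ^ t = ∑ i, ∑ j, ρ' i j ^ t := Fintype.sum_sigma _
      _ ≤ ∑ i, ρ i ^ t / 2 := Finset.sum_le_sum fun i _ => hsum' i
      _ = (∑ i, ρ i ^ t) / 2 := (Finset.sum_div _ _ _).symm
      _ ≤ a / 2 := by gcongr

lemma forall_hasCenteredBallCover (hD : HasHalvingCovers t δ D) (ht : 0 < t) (hδ : 0 ≤ δ)
    (hSD : S ⊆ D) (ha : a < δ ^ t) (h : HasCenteredBallCover t a S) :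
    ∀ ε > 0, HasCenteredBallCover t ε S := by
  have hiter (k : ℕ) : HasCenteredBallCover t (a / 2 ^ k) S := by
    induction k with
    | zero => simpa using h
    | succ k ih =>
      rw [pow_succ, ← div_div]
      refine hD.halve ht hδ hSD ((div_le_self h.nonneg ?_).trans_lt ha) ih
      exact one_le_pow₀ one_le_two
  intro ε hε
  have hlim : Tendsto (fun k : ℕ => a / 2 ^ k) atTop (𝓝 0) :=
    tendsto_const_nhds.div_atTop (tendsto_pow_atTop_atTop_of_one_lt one_lt_two)
  obtain ⟨k, hk⟩ := (hlim.eventually (gt_mem_nhds hε)).exists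
  exact (hiter k).mono hk.le

theorem hausdorffMeasure_eq_zero [MeasurableSpace E] [BorelSpace E] [SecondCountableTopology E]
    (hD : HasHalvingCovers t δ D) (ht : 0 < t) (hδ : 0 < δ) : μH[t] D = 0 := by
  refine measure_null_of_locally_null D fun x hx => ⟨D ∩ ball x (δ / 2),
    inter_mem_nhdsWithin D (ball_mem_nhds x (half_pos hδ)), ?_⟩
  have hsub : D ∩ ball x (δ / 2) ⊆ ball x (δ / 2) ∩ D := fun y hy => ⟨hy.2, hy.1⟩
  have hcover := hD x hx (δ / 2) (half_pos hδ) (half_lt_self hδ) _ hsub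
  have hsmall : (δ / 2) ^ t / 2 < δ ^ t :=
    calc (δ / 2) ^ t / 2 < (δ / 2) ^ t := half_lt_self (by positivity)
      _ < δ ^ t := Real.rpow_lt_rpow (half_pos hδ).le (half_lt_self hδ) ht
  exact HasCenteredBallCover.hausdorffMeasure_eq_zero ht <|
    hD.forall_hasCenteredBallCover ht hδ.le inter_subset_left hsmall hcover

end HasHalvingCovers

/-- The covering property (P): if every subset of a small ball around each
point of `F` can be covered by finitely many balls centered in it whose radii
satisfy `∑ ρᵢᵗ ≤ rᵗ/2`, then the `t`-dimensional Hausdorff measure of `F`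
vanishes. -/
theorem stmt_5 (n : ℕ) (t : ℝ) (ht : 0 < t) (F : Set (EuclideanSpace ℝ (Fin n)))
    (hP : ∀ x ∈ F, ∃ rx > (0 : ℝ), ∀ r : ℝ, 0 < r → r < rx → ∀ S ⊆ ball x r ∩ F,
      ∃ (m : ℕ) (c : Fin m → EuclideanSpace ℝ (Fin n)) (ρ : Fin m → ℝ),
        (∀ i, c i ∈ S) ∧ (∀ i, 0 < ρ i) ∧ (S ⊆ ⋃ i, ball (c i) (ρ i)) ∧
        ∑ i, ρ i ^ t ≤ r ^ t / 2) :
    μH[t] F = 0 := by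
  choose! R hRpos hRP using hP
  have hF : F ⊆ ⋃ k : ℕ, {x ∈ F | 1 / ((k : ℝ) + 1) ≤ R x} := fun x hx =>
    have ⟨k, hk⟩ := exists_nat_one_div_lt (hRpos x hx)
    mem_iUnion.2 ⟨k, hx, hk.le⟩
  refine measure_mono_null hF <| measure_iUnion_null fun k =>
    HasHalvingCovers.hausdorffMeasure_eq_zero (δ := 1 / ((k : ℝ) + 1)) ?_ ht (by positivity)
  intro x hx r hr hrR S hS
  obtain ⟨m, c, ρ, hcover⟩ := hRP x hx.1 r hr (hrR.trans_le hx.2) S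
    (hS.trans (inter_subset_inter_right _ (sep_subset _ _)))
  exact ⟨Fin m, inferInstance, c, ρ, hcover⟩
end
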